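/- arXiv:math/0311461 — 2 statements merged into one kernel-verified Lean document; each statement's English description precedes it below -/
import Mathlib

section
/- Let 1 ∈ A ⊂ B be an inclusion of unital C*-algebras with a faithful conditional expectation E : B → A of index-finite type, with quasi-basis {(v_i, v_i*)}_{i=1}^n (i.e., every x ∈ B satisfies x = Σ_{i=1}^n E(xv_i)v_i* = Σ_{i=1}^n v_i E(v_i* x)). Then tsr(B) ≤ n · tsr(A). -/
/-- `Lg R n` is the set of n-tuples generating `R` as a left ideal. -/
def Lg (R : Type*) [Ring R] (n : ℕ) : Set (Fin n → R) :=
  {b | ∃ c : Fin n → R, ∑ i, c i * b i = 1}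

/-- Topological stable rank. -/
noncomputable def tsr (R : Type*) [Ring R] [TopologicalSpace R] : ℕ∞ :=
  sInf {N : ℕ∞ | ∃ n : ℕ, (n : ℕ∞) = N ∧ Dense (Lg R n)}

/-- `E : B → B` is a conditional expectation onto the unital C*-subalgebra `A` of `B`:
it is an `A`-bimodule projection onto `A`, star-preserving and positive. -/
def IsCondExp {B : Type*} [CStarAlgebra B] (A : StarSubalgebra ℂ B) (E : B →ₗ[ℂ] B) : Prop :=
  (∀ b : B, E b ∈ A) ∧ (∀ a ∈ A, E a = a) ∧
  (∀ a ∈ A, ∀ b : B, ∀ c ∈ A, E (a * b * c) = a * E b * c) ∧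
  (∀ b : B, E (star b) = star (E b)) ∧ (∀ b : B, ∃ x : B, E (star b * b) = star x * x)

/-- `E` is faithful. -/
def IsFaithful {B : Type*} [CStarAlgebra B] (E : B →ₗ[ℂ] B) : Prop :=
  ∀ b : B, E (star b * b) = 0 → b = 0

/-- `{(vᵢ, vᵢ*)}` is a quasi-basis for `E`: every `x` satisfies
`x = ∑ vᵢ E(vᵢ* x) = ∑ E(x vᵢ) vᵢ*`.  In particular `E` is of index-finite type. -/
def IsQuasiBasis {B : Type*} [CStarAlgebra B] (E : B →ₗ[ℂ] B) {n : ℕ} (v : Fin n → B) : Prop :=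
  ∀ b : B, (∑ i, v i * E (star (v i) * b)) = b ∧ (∑ i, E (b * v i) * star (v i)) = b

/-! If unimodular `m`-tuples are dense in `A`, row reduction against a unimodular row shows,
by induction on `n`, that `n·m` rows spanning the free module `Aⁿ` are dense. The quasi-basis
makes `(aⱼ) ↦ ∑ aⱼ vⱼ*` a continuous surjection of left `A`-modules `Aⁿ → B`; it carries these
to `n·m`-tuples spanning `B` over `A`, in particular generating `B` as a left ideal. -/

open Function Set Submodule

def spanningFamilies (R M ι : Type*) [Semiring R] [AddCommMonoid M] [Module R M] :
    Set (ι → M) :=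
  {f | span R (range f) = ⊤}

theorem mem_spanningFamilies_self_iff {R ι : Type*} [Ring R] [Fintype ι] {t : ι → R} :
    t ∈ spanningFamilies R R ι ↔ ∃ a : ι → R, ∑ i, a i * t i = 1 := by
  change span R (range t) = ⊤ ↔ _
  rw [Ideal.eq_top_iff_one, mem_span_range_iff_exists_fun]
  simp only [smul_eq_mul]

theorem Lg_eq_spanningFamilies (R : Type*) [Ring R] (n : ℕ) :
    Lg R n = spanningFamilies R R (Fin n) :=
  Set.ext fun _ => mem_spanningFamilies_self_iff.symm

section Algebra

variable {R M ι κ : Type*} [Ring R] [AddCommGroup M] [Module R M]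

/-- The rows of `κ` combine to `(1, s)`; subtracting `c q • (1, s)` from the rows of `ι` leaves
`(0, z q)`, and these span `0 × M`. -/
theorem sumElim_mem_spanningFamilies_prod [Fintype κ] {t a : κ → R} (hta : ∑ k, a k * t k = 1)
    (y : κ → M) (c : ι → R) {z : ι → M} (hz : z ∈ spanningFamilies R M ι) :
    Sum.elim (fun k => (t k, y k)) (fun q => (c q, z q + c q • ∑ k, a k • y k)) ∈
      spanningFamilies R (R × M) (κ ⊕ ι) := by
  set s := ∑ k, a k • y k
  set S := span R (range (Sum.elim (fun k => (t k, y k)) (fun q => (c q, z q + c q • s))))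
  have hone : ((1 : R), s) ∈ S := by
    have : ((1 : R), s) = ∑ k, a k • (t k, y k) := by
      ext <;> simp [Prod.fst_sum, Prod.snd_sum, hta, s]
    rw [this]
    exact sum_mem fun k _ => S.smul_mem _ (subset_span ⟨.inl k, rfl⟩)
  have hzero : ∀ w : M, ((0 : R), w) ∈ S := by
    have : span R (range z) ≤ S.comap (LinearMap.inr R R M) := span_le.mpr <| by
      rintro _ ⟨q, rfl⟩
      have : ((0 : R), z q) = (c q, z q + c q • s) - c q • ((1 : R), s) := by ext <;> simp
      change ((0 : R), z q) ∈ S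
      rw [this]
      exact S.sub_mem (subset_span ⟨.inr q, rfl⟩) (S.smul_mem _ hone)
    exact fun w => (hz ▸ this) trivial
  refine eq_top_iff'.mpr fun ⟨r, w⟩ => ?_
  have : (r, w) = r • ((1 : R), s) + ((0 : R), w - r • s) := by ext <;> simp
  rw [this]
  exact S.add_mem (S.smul_mem _ hone) (hzero _)

end Algebra

section Topology

variable {R M N ι κ : Type*} [Ring R] [AddCommGroup M] [Module R M] [TopologicalSpace M]

theorem dense_spanningFamilies_of_surjective [AddCommGroup N] [Module R N] [TopologicalSpace N]
    (f : M →ₗ[R] N) (hf : Continuous f) (hf_surj : Surjective f) (e : ι ≃ κ)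
    (h : Dense (spanningFamilies R M ι)) : Dense (spanningFamilies R N κ) := by
  let F : (ι → M) → (κ → N) := fun y => f ∘ y ∘ e.symm
  have hF_surj : Surjective F := fun z =>
    ⟨surjInv hf_surj ∘ z ∘ e, by ext k; simp [F, surjInv_eq hf_surj]⟩
  have hF : Continuous F := continuous_pi fun k => hf.comp (continuous_apply _)
  refine (hF_surj.denseRange.dense_image hF h).mono ?_
  rintro _ ⟨y, hy, rfl⟩
  simp only [spanningFamilies, mem_ofPred_eq, F, range_comp, e.symm.surjective.range_eq,
    image_univ, span_image] at hy ⊢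
  rw [hy, Submodule.map_top, LinearMap.range_eq_top.mpr hf_surj]

/-- First move the first coordinates of the `κ`-rows to a nearby unimodular tuple, then move the
`ι`-rows, reduced against the resulting row `(1, s)`, to a nearby spanning family of `M`. -/
theorem dense_spanningFamilies_prod [TopologicalSpace R] [Fintype κ] [ContinuousAdd M]
    (hR : Dense (spanningFamilies R R κ)) (hM : Dense (spanningFamilies R M ι)) :
    Dense (spanningFamilies R (R × M) (κ ⊕ ι)) := by
  intro Y
  let withFirstCol : (κ → R) → (κ ⊕ ι → R × M) := fun t =>
    Sum.elim (fun k => (t k, (Y (.inl k)).2)) (Y ∘ .inr)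
  have hwithFirstCol : Continuous withFirstCol := by
    refine continuous_pi fun i => ?_
    cases i <;> simp only [withFirstCol, Sum.elim_inl, Sum.elim_inr, comp_apply] <;> fun_prop
  have hmem : ∀ t ∈ spanningFamilies R R κ,
      withFirstCol t ∈ closure (spanningFamilies R (R × M) (κ ⊕ ι)) := by
    intro t ht
    obtain ⟨a, hta⟩ := mem_spanningFamilies_self_iff.mp ht
    set s := ∑ k, a k • (Y (.inl k)).2
    let Ψ : (ι → M) → (κ ⊕ ι → R × M) := fun z =>
      Sum.elim (fun k => (t k, (Y (.inl k)).2))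
        (fun q => ((Y (.inr q)).1, z q + (Y (.inr q)).1 • s))
    have hΨ : Continuous Ψ := by
      refine continuous_pi fun i => ?_
      cases i <;> simp only [Ψ, Sum.elim_inl, Sum.elim_inr] <;> fun_prop
    have : withFirstCol t = Ψ (fun q => (Y (.inr q)).2 - (Y (.inr q)).1 • s) := by
      ext (_ | _) <;> simp [withFirstCol, Ψ]
    rw [this]
    exact map_mem_closure hΨ (hM _) fun z hz => sumElim_mem_spanningFamilies_prod hta _ _ hz
  have : withFirstCol (fun k => (Y (.inl k)).1) = Y := by
    ext (_ | _) <;> rfl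
  rw [← this, ← closure_closure (s := spanningFamilies R (R × M) (κ ⊕ ι))]
  exact map_mem_closure hwithFirstCol (hR _) hmem

theorem dense_spanningFamilies_pi [TopologicalSpace R] [Fintype κ] [ContinuousAdd R]
    (h : Dense (spanningFamilies R R κ)) :
    ∀ n : ℕ, Dense (spanningFamilies R (Fin n → R) (Fin n × κ))
  | 0 => by
    convert dense_univ
    exact eq_univ_of_forall fun _ => Subsingleton.elim _ _
  | n + 1 =>
    dense_spanningFamilies_of_surjective (Fin.consEquivL R fun _ => R).toLinearMap
      (Fin.consEquivL R fun _ => R).continuous (Fin.consEquivL R fun _ => R).surjective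
      (((finSuccEquiv n).prodCongr (Equiv.refl κ)).trans optionProdEquiv).symm
      (dense_spanningFamilies_prod h (dense_spanningFamilies_pi h n))

end Topology

section Tsr

variable {R S : Type*} [Ring R] [TopologicalSpace R] [Ring S] [TopologicalSpace S]

theorem tsr_le_of_dense {n : ℕ} (h : Dense (Lg R n)) : tsr R ≤ n :=
  sInf_le ⟨n, rfl, h⟩

theorem dense_lg_toNat_tsr (h : tsr R ≠ ⊤) : Dense (Lg R (tsr R).toNat) := by
  have hne : {N : ℕ∞ | ∃ n : ℕ, (n : ℕ∞) = N ∧ Dense (Lg R n)}.Nonempty := by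
    contrapose! h
    rw [tsr, h, sInf_empty]
  obtain ⟨n, hn, hd⟩ := csInf_mem hne
  rwa [tsr, ← hn, ENat.toNat_natCast]

theorem tsr_le_mul_of_dense_lg {n : ℕ} (hn : n ≠ 0)
    (h : ∀ m, Dense (Lg R m) → Dense (Lg S (n * m))) : tsr S ≤ n * tsr R := by
  by_cases hR : tsr R = ⊤
  · rw [hR, ENat.mul_top (by exact_mod_cast hn)]
    exact le_top
  · calc tsr S ≤ (n * (tsr R).toNat : ℕ) := tsr_le_of_dense (h _ (dense_lg_toNat_tsr hR))
      _ = n * tsr R := by push_cast; rw [ENat.natCast_toNat hR]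

end Tsr

section QuasiBasis

variable {B : Type*} [CStarAlgebra B] (A : StarSubalgebra ℂ B)

theorem continuous_linearCombination {n : ℕ} (w : Fin n → B) :
    Continuous (Fintype.linearCombination A w) := by
  change Continuous fun f : Fin n → A => ∑ j, (f j : B) * w j
  fun_prop

variable {A} {E : B →ₗ[ℂ] B} {n : ℕ} {v : Fin n → B}

theorem surjective_linearCombination_star_of_isQuasiBasis (hE : ∀ b, E b ∈ A)
    (hv : IsQuasiBasis E v) : Surjective (Fintype.linearCombination A fun j => star (v j)) :=
  fun x => ⟨fun j => ⟨E (x * v j), hE _⟩, by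
    rw [Fintype.linearCombination_apply]
    exact (hv x).2⟩

theorem dense_lg_mul_of_isQuasiBasis (hE : ∀ b, E b ∈ A) (hv : IsQuasiBasis E v) {m : ℕ}
    (hA : Dense (Lg A m)) : Dense (Lg B (n * m)) := by
  rw [Lg_eq_spanningFamilies] at hA ⊢
  refine (dense_spanningFamilies_of_surjective _ (continuous_linearCombination A _)
    (surjective_linearCombination_star_of_isQuasiBasis hE hv) finProdFinEquiv
    (dense_spanningFamilies_pi hA n)).mono fun x hx => eq_top_iff.mpr ?_
  exact (eq_top_iff.mp hx).trans (span_le_restrictScalars A B _)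

end QuasiBasis

theorem stmt_4_general {B : Type*} [CStarAlgebra B] (A : StarSubalgebra ℂ B) (E : B →ₗ[ℂ] B)
    (hE : IsCondExp A E) {n : ℕ} (v : Fin n → B)
    (hv : IsQuasiBasis E v) :
    tsr B ≤ (n : ℕ∞) * tsr A := by
  rcases eq_or_ne n 0 with rfl | hn
  · have h01 : (0 : B) = 1 := by simpa using (hv 1).2
    have hB : Dense (Lg B 0) := by
      convert dense_univ
      exact eq_univ_of_forall fun _ => ⟨0, by simpa using h01⟩
    exact (tsr_le_of_dense hB).trans (by simp)
  · exact tsr_le_mul_of_dense_lg hn fun m hm => dense_lg_mul_of_isQuasiBasis hE.1 hv hm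

/-- If `E : B → A` is a faithful conditional expectation of index-finite
type with an `n`-element quasi-basis `{(vᵢ, vᵢ*)}`, then `tsr B ≤ n · tsr A`. -/
theorem stmt_4 {B : Type*} [CStarAlgebra B] (A : StarSubalgebra ℂ B) (E : B →ₗ[ℂ] B)
    (hE : IsCondExp A E) (hf : IsFaithful E) {n : ℕ} (v : Fin n → B)
    (hv : IsQuasiBasis E v) :
    tsr B ≤ (n : ℕ∞) * tsr A :=
  stmt_4_general A E hE v hv
end

section
/- Let 1 ∈ A ⊂ B be an inclusion of unital C*-algebras of index-finite type, and let {(v_i, v_i*)}_{i=1}^m be a quasi-basis for a faithful conditional expectation E : B → A. Then tsr(A) ≤ m²(tsr(B) + 1) − 2m + 1. -/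
open Finset

theorem LinearMap.continuous_of_forall_map_star_mul_self {B C : Type*} [CStarAlgebra B]
    [CStarAlgebra C] (E : B →ₗ[ℂ] C) (hE : ∀ b, ∃ x, E (star b * b) = star x * x) :
    Continuous E := by
  let := CStarAlgebra.spectralOrder B
  let := CStarAlgebra.spectralOrder C
  have := CStarAlgebra.spectralOrderedRing B
  have := CStarAlgebra.spectralOrderedRing C
  have hpos : ∀ b : B, 0 ≤ b → 0 ≤ E b := fun b hb => by
    obtain ⟨x, hx⟩ := hE (CFC.sqrt b)
    rw [(CFC.sqrt_nonneg b).isSelfAdjoint.star_eq, CFC.sqrt_mul_sqrt_self b hb] at hx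
    exact hx ▸ star_mul_self_nonneg x
  exact map_continuous (PositiveLinearMap.mk₀ E hpos)

theorem isOpenMap_of_continuous_rightInverse {X Y : Type*} [AddGroup X] [TopologicalSpace X]
    [ContinuousAdd X] [AddCommGroup Y] [TopologicalSpace Y] [ContinuousSub Y]
    (T : X →+ Y) {S : Y →+ X} (hS : Continuous S) (hTS : Function.RightInverse S T) :
    IsOpenMap T :=
  IsOpenMap.of_sections fun x =>
    ⟨fun y => x + S (y - T x), by fun_prop, by simp, fun y => by simp [hTS _]⟩

theorem tsr_eq_zero_of_subsingleton (R : Type*) [Ring R] [TopologicalSpace R] [Subsingleton R] :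
    tsr R = 0 := by
  have : Lg R 0 = Set.univ := Set.eq_univ_of_forall fun _ => ⟨0, Subsingleton.elim _ _⟩
  exact nonpos_iff_eq_zero.1 (sInf_le ⟨0, rfl, this ▸ dense_univ⟩)

theorem tsr_le_mul_tsr {R S : Type*} [Ring R] [TopologicalSpace R] [Ring S] [TopologicalSpace S]
    {m : ℕ} (hm : m ≠ 0) (h : ∀ n, Dense (Lg S n) → Dense (Lg R (m * n))) :
    tsr R ≤ m * tsr S := by
  rcases Set.eq_empty_or_nonempty {N : ℕ∞ | ∃ n : ℕ, (n : ℕ∞) = N ∧ Dense (Lg S n)} with hs | hs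
  · have htop : tsr S = ⊤ := by rw [tsr, hs, sInf_empty]
    rw [htop, ENat.mul_top (by exact_mod_cast hm)]
    exact le_top
  · obtain ⟨n, hn, hd⟩ : ∃ n : ℕ, (n : ℕ∞) = tsr S ∧ Dense (Lg S n) := csInf_mem hs
    rw [← hn, ← Nat.cast_mul]
    exact sInf_le ⟨m * n, rfl, h n hd⟩

theorem natCast_mul_le_sq_mul_add_one_sub_two_mul_add_one (m : ℕ) (t : ℕ∞) :
    (m : ℕ∞) * t ≤ m ^ 2 * (t + 1) - 2 * m + 1 := by
  induction t using ENat.recTopCoe with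
  | top =>
    rcases eq_or_ne m 0 with rfl | hm
    · simp
    · rw [top_add, ENat.mul_top (pow_ne_zero 2 (by exact_mod_cast hm)), ← Nat.cast_ofNat,
        ← Nat.cast_mul, ENat.top_sub_natCast, top_add]
      exact le_top
  | coe n =>
    have : m * n ≤ m ^ 2 * (n + 1) - 2 * m + 1 := by
      have : m * n ≤ m ^ 2 * n := Nat.mul_le_mul_right n (Nat.le_self_pow two_ne_zero m)
      have : 2 * m ≤ m ^ 2 + 1 := by nlinarith [sq_nonneg ((m : ℤ) - 1)]
      have : m ^ 2 * (n + 1) = m ^ 2 * n + m ^ 2 := by ring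
      omega
    exact_mod_cast this

section QuasiBasis

variable {B : Type*} [CStarAlgebra B] {A : StarSubalgebra ℂ B} {E : B →ₗ[ℂ] B} {m n : ℕ}

theorem IsCondExp.map_mul_of_mem (hE : IsCondExp A E) (b : B) {a : B} (ha : a ∈ A) :
    E (b * a) = E b * a := by
  simpa using hE.2.2.1 1 (one_mem A) b a ha

/-- Reading `σ : Fin (m * n) → A` as an `m × n` matrix over `A`, this is the row vector `v`
times `σ`. -/
noncomputable def blockCombine (A : StarSubalgebra ℂ B) (v : Fin m → B) :
    (Fin (m * n) → A) →+ (Fin n → B) where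
  toFun σ k := ∑ j, v j * σ (finProdFinEquiv (j, k))
  map_zero' := by ext; simp
  map_add' σ τ := by ext; simp [mul_add, sum_add_distrib]

noncomputable def quasiBasisCoeffs (hA : ∀ b, E b ∈ A) (v : Fin m → B) :
    (Fin n → B) →+ (Fin (m * n) → A) where
  toFun b i := ⟨E (star (v (finProdFinEquiv.symm i).1) * b (finProdFinEquiv.symm i).2), hA _⟩
  map_zero' := by ext; simp
  map_add' b c := by ext; simp [mul_add]

theorem continuous_quasiBasisCoeffs (hA : ∀ b, E b ∈ A) (hE : Continuous E) (v : Fin m → B) :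
    Continuous (quasiBasisCoeffs (n := n) hA v) :=
  continuous_pi fun _ => (hE.comp (by fun_prop)).subtype_mk _

theorem blockCombine_quasiBasisCoeffs (hA : ∀ b, E b ∈ A) {v : Fin m → B} (hv : IsQuasiBasis E v)
    (b : Fin n → B) : blockCombine A v (quasiBasisCoeffs hA v b) = b := by
  ext k
  simp only [blockCombine, quasiBasisCoeffs, AddMonoidHom.coe_mk, ZeroHom.coe_mk,
    Equiv.symm_apply_apply]
  exact (hv (b k)).1

theorem mem_Lg_of_blockCombine_mem_Lg (hE : IsCondExp A E) (v : Fin m → B) {σ : Fin (m * n) → A}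
    (hσ : blockCombine A v σ ∈ Lg B n) : σ ∈ Lg A (m * n) := by
  obtain ⟨c, hc⟩ := hσ
  refine ⟨fun i => ⟨E (c (finProdFinEquiv.symm i).2 * v (finProdFinEquiv.symm i).1), hE.1 _⟩, ?_⟩
  apply Subtype.ext
  calc
    _ = ∑ k, ∑ j, E (c k * v j) * σ (finProdFinEquiv (j, k)) := by
      push_cast
      rw [← finProdFinEquiv.sum_comp, Fintype.sum_prod_type, sum_comm]
      simp
    _ = E (∑ k, c k * blockCombine A v σ k) := by
      simp only [blockCombine, AddMonoidHom.coe_mk, ZeroHom.coe_mk, mul_sum, map_sum, ← mul_assoc,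
        hE.map_mul_of_mem _ (σ _).2]
    _ = 1 := by rw [hc, hE.2.1 1 (one_mem A)]

theorem dense_Lg_of_isQuasiBasis (hE : IsCondExp A E) {v : Fin m → B} (hv : IsQuasiBasis E v)
    (hd : Dense (Lg B n)) : Dense (Lg A (m * n)) :=
  have hT : IsOpenMap (blockCombine A v) := isOpenMap_of_continuous_rightInverse _
    (continuous_quasiBasisCoeffs hE.1 (E.continuous_of_forall_map_star_mul_self hE.2.2.2.2) v)
    (blockCombine_quasiBasisCoeffs hE.1 hv)
  (hd.preimage hT).mono fun _ => mem_Lg_of_blockCombine_mem_Lg hE v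

end QuasiBasis

theorem stmt_11_general {B : Type*} [CStarAlgebra B] (A : StarSubalgebra ℂ B) (E : B →ₗ[ℂ] B)
    (hE : IsCondExp A E) {m : ℕ} (v : Fin m → B)
    (hv : IsQuasiBasis E v) :
    tsr A ≤ (m : ℕ∞) ^ 2 * (tsr B + 1) - 2 * (m : ℕ∞) + 1 := by
  rcases eq_or_ne m 0 with rfl | hm
  · have : Subsingleton B := subsingleton_of_forall_eq 0 fun b => by simpa using (hv b).1.symm
    rw [tsr_eq_zero_of_subsingleton]
    exact zero_le
  · calc tsr A ≤ m * tsr B := tsr_le_mul_tsr hm fun _ => dense_Lg_of_isQuasiBasis hE hv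
      _ ≤ _ := natCast_mul_le_sq_mul_add_one_sub_two_mul_add_one m (tsr B)

/-- If `1 ∈ A ⊆ B` is of index-finite type with an `m`-element
quasi-basis `{(vᵢ, vᵢ*)}` for a faithful conditional expectation `E : B → A`, then
`tsr A ≤ m²(tsr B + 1) − 2m + 1`. -/
theorem stmt_11 {B : Type*} [CStarAlgebra B] (A : StarSubalgebra ℂ B) (E : B →ₗ[ℂ] B)
    (hE : IsCondExp A E) (hf : IsFaithful E) {m : ℕ} (v : Fin m → B)
    (hv : IsQuasiBasis E v) :
    tsr A ≤ (m : ℕ∞) ^ 2 * (tsr B + 1) - 2 * (m : ℕ∞) + 1 :=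
  stmt_11_general A E hE v hv
end
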